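/- For every n ≥ 1 and every sequence of positive integers ℓ₁,…,ℓₙ for which a binary alphabetic code exists, there also exists a binary alphabetic code in which the i-th codeword has length at most min(ℓᵢ, n−1) for all i. -/

import Mathlib

/-- No codeword is a prefix of another. -/
def PrefixFree {n : ℕ} (w : Fin n → List Bool) : Prop :=
  ∀ i j : Fin n, i ≠ j → ¬ (w i <+: w j)

/-- The codewords are strictly increasing in the lexicographic order on binary strings. -/
def LexIncreasing {n : ℕ} (w : Fin n → List Bool) : Prop :=
  ∀ i j : Fin n, i < j → List.Lex (· < ·) (w i) (w j)

/-- A binary alphabetic code: prefix-free and lexicographically increasing codewords. -/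
def IsAlphabeticCode {n : ℕ} (w : Fin n → List Bool) : Prop :=
  PrefixFree w ∧ LexIncreasing w

namespace ShortenAux

/-- asymmetry of lex order on bool lists -/
lemma lexAsymm : ∀ {a b : List Bool}, List.Lex (·<·) a b → List.Lex (·<·) b a → False := by
  intro a b h
  induction h with
  | nil => intro h2; cases h2
  | @cons x l1 l2 h ih =>
      intro h2
      cases h2 with
      | cons h' => exact ih h'
      | rel h' => exact absurd h' (lt_irrefl _)
  | @rel x l1 y l2 h =>
      intro h2
      cases h2 with
      | cons h' => exact absurd h (lt_irrefl _)
      | rel h' => exact absurd h (lt_asymm h')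

lemma boolLt : ∀ {x y : Bool}, x < y → x = false ∧ y = true := by decide

/-- first difference -/
lemma firstDiff : ∀ {a b : List Bool}, List.Lex (·<·) a b →
    a <+: b ∨ ∃ k, a.take k = b.take k ∧ a[k]? = some false ∧ b[k]? = some true := by
  intro a b h
  induction h with
  | nil => left; exact List.nil_prefix
  | @cons x l1 l2 h ih =>
      rcases ih with hp | ⟨k, h1, h2, h3⟩
      · left; exact List.cons_prefix_cons.mpr ⟨rfl, hp⟩
      · right; exact ⟨k + 1, by simpa using h1, by simpa using h2, by simpa using h3⟩
  | @rel x l1 y l2 h =>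
      right
      obtain ⟨hx, hy⟩ := boolLt h
      exact ⟨0, rfl, by simp [hx], by simp [hy]⟩

lemma lex_of_prefixes : ∀ (q : List Bool) {a b : List Bool},
    q ++ [false] <+: a → q ++ [true] <+: b → List.Lex (·<·) a b := by
  intro q
  induction q with
  | nil =>
      rintro a b ⟨t, rfl⟩ ⟨s, rfl⟩
      exact List.Lex.rel (by decide)
  | cons x q ih =>
      rintro a b ⟨t, rfl⟩ ⟨s, rfl⟩
      simp only [List.cons_append]
      exact List.Lex.cons (ih ⟨t, by simp⟩ ⟨s, by simp⟩)

/-- betweenness: a string lex-between two extensions of q∘false and q∘true starts with q -/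
lemma between : ∀ (q a b c : List Bool), q ++ [false] <+: a → q ++ [true] <+: c →
    List.Lex (·<·) a b → List.Lex (·<·) b c → q <+: b := by
  intro q
  induction q with
  | nil => intro _ b _ _ _ _ _; exact List.nil_prefix
  | cons x q ih =>
      intro a b c ha hc hab hbc
      obtain ⟨t, rfl⟩ := ha
      obtain ⟨s, rfl⟩ := hc
      simp only [List.cons_append] at hab hbc ⊢
      cases hab with
      | cons h1 =>
          -- b = x :: b'
          rename_i b'
          cases hbc with
          | cons h2 =>
              exact List.cons_prefix_cons.mpr ⟨rfl, ih _ b' _ ⟨t, by simp⟩ ⟨s, by simp⟩ h1 h2⟩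
          | rel h2 => exact absurd h2 (lt_irrefl _)
      | rel h1 =>
          -- head of b is y with x < y, so x = false, y = true
          obtain ⟨hx, hy⟩ := boolLt h1
          rename_i y b'
          subst hx hy
          -- b = true :: b', c = false :: _, Lex b c impossible
          cases hbc with
          | rel h2 => exact absurd h2 (by decide)

lemma getq {q a : List Bool} {b : Bool} (h : q ++ [b] <+: a) : a[q.length]? = some b := by
  obtain ⟨t, rfl⟩ := h
  rw [List.append_assoc, List.getElem?_append_right (le_refl _)]
  simp

lemma prefix_getElem? {l1 l2 : List Bool} (h : l1 <+: l2) {k : ℕ} (hk : k < l1.length) :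
    l2[k]? = l1[k]? := by
  obtain ⟨t, rfl⟩ := h
  rw [List.getElem?_append_left hk]

lemma prefix_of_take_get {a : List Bool} {k : ℕ} {b : Bool} (h : a[k]? = some b) :
    a.take k ++ [b] <+: a := by
  have h2 : a.take (k + 1) = a.take k ++ [b] := by
    rw [List.take_succ, h]; rfl
  rw [← h2]
  exact List.take_prefix _ _

section Code

variable {n : ℕ} (w : Fin n → List Bool)

def branchNode (p : List Bool) : Prop :=
  (∃ i, p ++ [false] <+: w i) ∧ (∃ j, p ++ [true] <+: w j)

instance (p : List Bool) : Decidable (branchNode w p) := by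
  unfold branchNode; infer_instance

def compressW : List Bool → List Bool → List Bool
  | _, [] => []
  | p, b :: t => (if branchNode w p then [b] else []) ++ compressW (p ++ [b]) t

lemma compressW_length_le : ∀ (u p : List Bool), (compressW w p u).length ≤ u.length := by
  intro u
  induction u with
  | nil => intro p; simp [compressW]
  | cons b t ih =>
      intro p
      simp only [compressW, List.length_append, List.length_cons]
      have := ih (p ++ [b])
      split <;> simp <;> omega

/-- the threshold lemma -/
lemma threshold (hpf : PrefixFree w) (hlex : LexIncreasing w) {q : List Bool}
    (hq : branchNode w q) :
    ∃ k : ℕ, ∃ hk : k + 1 < n, q ++ [false] <+: w ⟨k, Nat.lt_of_succ_lt hk⟩ ∧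
      q ++ [true] <+: w ⟨k + 1, hk⟩ := by
  classical
  obtain ⟨⟨i, hi⟩, ⟨j, hj⟩⟩ := hq
  set A : Finset (Fin n) := Finset.univ.filter (fun m => q ++ [false] <+: w m) with hA
  have hiA : i ∈ A := by simp [hA, hi]
  have hAne : A.Nonempty := ⟨i, hiA⟩
  set k : Fin n := A.max' hAne with hk
  have hkA : k ∈ A := A.max'_mem hAne
  have hkpre : q ++ [false] <+: w k := by simpa [hA] using hkA
  -- k < j
  have hkj : k < j := by
    rcases lt_trichotomy k j with h | h | h
    · exact h
    · exfalso
      subst h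
      have h1 := getq hkpre
      have h2 := getq hj
      rw [h1] at h2; exact absurd h2 (by simp)
    · exfalso
      exact lexAsymm (lex_of_prefixes q hkpre hj) (hlex j k h)
  have hk1n : (k : ℕ) + 1 < n := Nat.lt_of_le_of_lt (Nat.succ_le_of_lt hkj) j.isLt
  refine ⟨k, hk1n, by simpa using hkpre, ?_⟩
  set m : Fin n := ⟨(k : ℕ) + 1, hk1n⟩ with hm
  have hkm : k < m := by simp [hm, Fin.lt_def]
  have hmj : m ≤ j := by
    have : (k : ℕ) + 1 ≤ (j : ℕ) := hkj
    simpa [hm, Fin.le_def] using this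
  -- q <+: w m
  have hqm : q <+: w m := by
    rcases eq_or_lt_of_le hmj with h | h
    · subst h; exact (List.prefix_append q [true]).trans hj
    · exact between q (w k) (w m) (w j) hkpre hj (hlex k m hkm) (hlex m j h)
  -- w m ≠ q
  have hne : w m ≠ q := by
    intro h
    exact hpf m k (ne_of_gt hkm) (h ▸ ((List.prefix_append q [false]).trans hkpre))
  have hlen : q.length < (w m).length := by
    rcases lt_or_eq_of_le hqm.length_le with h | h
    · exact h
    · exact absurd (hqm.eq_of_length h).symm hne
  obtain ⟨b, hb⟩ : ∃ b, (w m)[q.length]? = some b := by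
    simp [List.getElem?_eq_some_iff, hlen]
  have hq_take : (w m).take q.length = q := by
    have := List.prefix_iff_eq_take.mp hqm
    exact this.symm
  have hpre_b : q ++ [b] <+: w m := by
    have := prefix_of_take_get hb
    rwa [hq_take] at this
  cases b with
  | false =>
      exfalso
      have hmA : m ∈ A := by simp [hA, hpre_b]
      exact absurd (A.le_max' m hmA) (not_le.mpr hkm)
  | true => exact hpre_b

/-- finite set of branching nodes -/
def BFin : Finset (List Bool) :=
  (((Finset.univ : Finset (Fin n)) ×ˢ
      Finset.range ((Finset.univ.sup fun i => (w i).length) + 1)).image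
    fun x => (w x.1).take x.2).filter (branchNode w)

lemma mem_BFin {q : List Bool} (hq : branchNode w q) : q ∈ BFin w := by
  obtain ⟨⟨i, hi⟩, -⟩ := id hq
  have hqi : q <+: w i := (List.prefix_append q [false]).trans hi
  refine Finset.mem_filter.mpr ⟨Finset.mem_image.mpr ⟨⟨i, q.length⟩, ?_, ?_⟩, hq⟩
  · refine Finset.mem_product.mpr ⟨Finset.mem_univ _, Finset.mem_range.mpr ?_⟩
    have := hqi.length_le
    have hsup : (w i).length ≤ Finset.univ.sup fun i => (w i).length :=
      Finset.le_sup (f := fun i => (w i).length) (Finset.mem_univ i)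
    omega
  · exact (List.prefix_iff_eq_take.mp hqi).symm

lemma BFin_card (hpf : PrefixFree w) (hlex : LexIncreasing w) : (BFin w).card ≤ n - 1 := by
  classical
  have := Finset.card_le_card_of_injOn
    (f := fun q => if h : branchNode w q then Classical.choose (threshold w hpf hlex h) else 0)
    (s := BFin w) (t := Finset.range (n - 1)) ?_ ?_
  · simpa using this
  · intro q hq
    have hb : branchNode w q := (Finset.mem_filter.mp hq).2
    simp only [dif_pos hb]
    obtain ⟨hk1, -⟩ := Classical.choose_spec (threshold w hpf hlex hb)
    simp only [Finset.mem_coe, Finset.mem_range]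
    omega
  · intro q1 h1 q2 h2 heq
    have hb1 : branchNode w q1 := (Finset.mem_filter.mp h1).2
    have hb2 : branchNode w q2 := (Finset.mem_filter.mp h2).2
    simp only [dif_pos hb1, dif_pos hb2] at heq
    set k1 := Classical.choose (threshold w hpf hlex hb1) with hdk1
    set k2 := Classical.choose (threshold w hpf hlex hb2) with hdk2
    obtain ⟨hk1, hf1, ht1⟩ := Classical.choose_spec (threshold w hpf hlex hb1)
    obtain ⟨hk2, hf2, ht2⟩ := Classical.choose_spec (threshold w hpf hlex hb2)
    have hkk : k2 = k1 := heq.symm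
    have ewf : w (⟨k2, Nat.lt_of_succ_lt hk2⟩ : Fin n) = w ⟨k1, Nat.lt_of_succ_lt hk1⟩ := by
      congr 1
      exact Fin.ext hkk
    have ewt : w (⟨k2 + 1, hk2⟩ : Fin n) = w ⟨k1 + 1, hk1⟩ := by
      congr 1
      exact Fin.ext (by simpa using hkk)
    rw [ewf] at hf2
    rw [ewt] at ht2
    -- comparable
    rcases le_total q1.length q2.length with hle | hle
    · rcases lt_or_eq_of_le hle with hlt | hleq
      · exfalso
        have hp12 : q1 <+: q2 := by
          have := List.prefix_of_prefix_length_le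
            ((List.prefix_append q1 [false]).trans hf1)
            ((List.prefix_append q2 [false]).trans hf2) (le_of_lt hlt)
          exact this
        -- bit of q2 at |q1| : from w⟨k1+1⟩ it's true, from w⟨k1⟩ it's false
        have e1 : (w (⟨k1 + 1, hk1⟩ : Fin n))[q1.length]? = some true := getq ht1
        have e2 : (w (⟨k1 + 1, hk1⟩ : Fin n))[q1.length]? = q2[q1.length]? :=
          prefix_getElem? ((List.prefix_append q2 [true]).trans ht2) hlt
        have e3 : (w (⟨k1, Nat.lt_of_succ_lt hk1⟩ : Fin n))[q1.length]? = some false := getq hf1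
        have e4 : (w (⟨k1, Nat.lt_of_succ_lt hk1⟩ : Fin n))[q1.length]? = q2[q1.length]? :=
          prefix_getElem? ((List.prefix_append q2 [false]).trans hf2) hlt
        rw [e1] at e2
        rw [e3] at e4
        rw [← e2] at e4
        exact absurd e4 (by simp)
      · have hp12 : q1 <+: q2 :=
          List.prefix_of_prefix_length_le
            ((List.prefix_append q1 [false]).trans hf1)
            ((List.prefix_append q2 [false]).trans hf2) (le_of_eq hleq)
        exact hp12.eq_of_length hleq
    · rcases lt_or_eq_of_le hle with hlt | hleq
      · exfalso
        have e1 : (w (⟨k1 + 1, hk1⟩ : Fin n))[q2.length]? = some true := getq ht2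
        have e2 : (w (⟨k1 + 1, hk1⟩ : Fin n))[q2.length]? = q1[q2.length]? :=
          prefix_getElem? ((List.prefix_append q1 [true]).trans ht1) hlt
        have e3 : (w (⟨k1, Nat.lt_of_succ_lt hk1⟩ : Fin n))[q2.length]? = some false := getq hf2
        have e4 : (w (⟨k1, Nat.lt_of_succ_lt hk1⟩ : Fin n))[q2.length]? = q1[q2.length]? :=
          prefix_getElem? ((List.prefix_append q1 [false]).trans hf1) hlt
        rw [e1] at e2
        rw [e3] at e4
        rw [← e2] at e4
        exact absurd e4 (by simp)
      · have hp21 : q2 <+: q1 :=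
          List.prefix_of_prefix_length_le
            ((List.prefix_append q2 [false]).trans hf2)
            ((List.prefix_append q1 [false]).trans hf1) (le_of_eq hleq)
        exact (hp21.eq_of_length hleq).symm

lemma compressW_length_le_card : ∀ (u p : List Bool),
    (compressW w p u).length ≤ ((BFin w).filter fun q => p <+: q).card := by
  intro u
  induction u with
  | nil => intro p; simp [compressW]
  | cons b t ih =>
      intro p
      have hsub : ((BFin w).filter fun q => p ++ [b] <+: q) ⊆
          ((BFin w).filter fun q => p <+: q) := by
        intro q hq
        rw [Finset.mem_filter] at hq ⊢
        exact ⟨hq.1, (List.prefix_append p [b]).trans hq.2⟩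
      simp only [compressW, List.length_append]
      by_cases hb : branchNode w p
      · rw [if_pos hb]
        have hpmem : p ∈ (BFin w).filter fun q => p <+: q :=
          Finset.mem_filter.mpr ⟨mem_BFin w hb, List.prefix_refl p⟩
        have hpnot : p ∉ (BFin w).filter fun q => p ++ [b] <+: q := by
          intro hmem
          have := (Finset.mem_filter.mp hmem).2.length_le
          simp at this
        have hins : insert p ((BFin w).filter fun q => p ++ [b] <+: q) ⊆
            ((BFin w).filter fun q => p <+: q) := by
          intro q hq
          rcases Finset.mem_insert.mp hq with rfl | hq
          · exact hpmem
          · exact hsub hq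
        have hcard := Finset.card_le_card hins
        rw [Finset.card_insert_of_notMem hpnot] at hcard
        have := ih (p ++ [b])
        simp only [List.length_singleton]
        omega
      · rw [if_neg hb]
        have := ih (p ++ [b])
        have := Finset.card_le_card hsub
        simp only [List.length_nil, Nat.zero_add]
        omega

lemma lex_append_same (X : List Bool) {s t : List Bool} (h : List.Lex (·<·) s t) :
    List.Lex (·<·) (X ++ s) (X ++ t) := by
  induction X with
  | nil => exact h
  | cons a X ih => exact List.Lex.cons ih

/-- key order lemma for compress -/
lemma compressW_order : ∀ (k : ℕ) (u v p : List Bool),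
    u.take k = v.take k → u[k]? = some false → v[k]? = some true →
    branchNode w (p ++ u.take k) →
    List.Lex (·<·) (compressW w p u) (compressW w p v) ∧
      ¬ compressW w p u <+: compressW w p v ∧ ¬ compressW w p v <+: compressW w p u := by
  intro k
  induction k with
  | zero =>
      intro u v p _ hu hv hb
      obtain ⟨u', rfl⟩ : ∃ u', u = false :: u' := by
        cases u with
        | nil => simp at hu
        | cons a u' => simp at hu; exact ⟨u', by rw [hu]⟩
      obtain ⟨v', rfl⟩ : ∃ v', v = true :: v' := by
        cases v with
        | nil => simp at hv
        | cons a v' => simp at hv; exact ⟨v', by rw [hv]⟩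
      simp only [List.take_zero, List.append_nil] at hb
      simp only [compressW, if_pos hb, List.singleton_append]
      refine ⟨List.Lex.rel (by decide), ?_, ?_⟩
      · intro hp; exact absurd (List.cons_prefix_cons.mp hp).1 (by decide)
      · intro hp; exact absurd (List.cons_prefix_cons.mp hp).1 (by decide)
  | succ k ih =>
      intro u v p htake hu hv hb
      obtain ⟨a, u', rfl⟩ : ∃ a u', u = a :: u' := by
        cases u with
        | nil => simp at hu
        | cons a u' => exact ⟨a, u', rfl⟩
      obtain ⟨c, v', rfl⟩ : ∃ c v', v = c :: v' := by
        cases v with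
        | nil => simp at hv
        | cons c v' => exact ⟨c, v', rfl⟩
      simp only [List.take_succ_cons, List.cons.injEq] at htake
      obtain ⟨rfl, htk⟩ := htake
      simp only [List.getElem?_cons_succ] at hu hv
      have hb' : branchNode w ((p ++ [a]) ++ u'.take k) := by
        rw [List.append_assoc]
        simpa using hb
      obtain ⟨hlex, hp1, hp2⟩ := ih u' v' (p ++ [a]) htk hu hv hb'
      simp only [compressW]
      refine ⟨?_, ?_, ?_⟩
      · exact lex_append_same _ hlex
      · intro hp
        exact hp1 ((List.prefix_append_right_inj _).mp hp)
      · intro hp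
        exact hp2 ((List.prefix_append_right_inj _).mp hp)

end Code

end ShortenAux

/-- If an alphabetic code with lengths ℓ₁,…,ℓₙ exists, then one exists in which the
i-th codeword has length at most min(ℓᵢ, n−1). -/
theorem shorten_code (n : ℕ) (hn : 1 ≤ n) (ℓ : Fin n → ℕ) (hpos : ∀ i, 0 < ℓ i)
    (h : ∃ w : Fin n → List Bool, IsAlphabeticCode w ∧ ∀ i, (w i).length = ℓ i) :
    ∃ w : Fin n → List Bool, IsAlphabeticCode w ∧
      ∀ i, (w i).length ≤ min (ℓ i) (n - 1) := by
  classical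
  obtain ⟨w, ⟨hpf, hlex⟩, hlen⟩ := h
  have key : ∀ i j : Fin n, i < j →
      List.Lex (· < ·) (ShortenAux.compressW w [] (w i)) (ShortenAux.compressW w [] (w j)) ∧
        ¬ ShortenAux.compressW w [] (w i) <+: ShortenAux.compressW w [] (w j) ∧
        ¬ ShortenAux.compressW w [] (w j) <+: ShortenAux.compressW w [] (w i) := by
    intro i j hij
    rcases ShortenAux.firstDiff (hlex i j hij) with hp | ⟨k, htake, hu, hv⟩
    · exact absurd hp (hpf i j (ne_of_lt hij))
    · have hb : ShortenAux.branchNode w ([] ++ (w i).take k) := by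
        simp only [List.nil_append]
        refine ⟨⟨i, ShortenAux.prefix_of_take_get hu⟩, ⟨j, ?_⟩⟩
        rw [htake]
        exact ShortenAux.prefix_of_take_get hv
      exact ShortenAux.compressW_order w k (w i) (w j) [] htake hu hv hb
  refine ⟨fun i => ShortenAux.compressW w [] (w i), ⟨?_, ?_⟩, ?_⟩
  · intro i j hne
    rcases lt_or_gt_of_ne hne with hij | hij
    · exact (key i j hij).2.1
    · exact (key j i hij).2.2
  · intro i j hij
    exact (key i j hij).1
  · intro i
    dsimp only
    refine le_min ?_ ?_
    · calc (ShortenAux.compressW w [] (w i)).length ≤ (w i).length :=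
            ShortenAux.compressW_length_le w (w i) []
        _ = ℓ i := hlen i
    · have h1 := ShortenAux.compressW_length_le_card w (w i) []
      have h2 : ((ShortenAux.BFin w).filter fun q => [] <+: q) = ShortenAux.BFin w :=
        Finset.filter_true_of_mem (fun _ _ => List.nil_prefix)
      have h3 := ShortenAux.BFin_card w hpf hlex
      rw [h2] at h1
      omega
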